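/- arXiv:2311.09123 — 3 statements merged into one kernel-verified Lean document; each statement's English description precedes it below -/
import Mathlib

section
/- If f : ℝ^d → ℝ is convex and differentiable with L-Lipschitz continuous gradient (L > 0), then L^{-1}∇f is firmly nonexpansive: for all u, v ∈ ℝ^d, ⟨L^{-1}∇f(u) − L^{-1}∇f(v), u − v⟩ ≥ ‖L^{-1}∇f(u) − L^{-1}∇f(v)‖₂². -/
open scoped RealInnerProductSpace

/-!
Convexity gives `f y ≥ f x + ⟪∇f x, y - x⟫`, and the Lipschitz bound on the gradient gives the
descent lemma `f y ≤ f x + ⟪∇f x, y - x⟫ + L / 2 * ‖y - x‖²`. The function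
`φ = f - ⟪∇f x, ·⟫` is convex with the same Lipschitz constant and is minimal at `x`. By the
descent lemma a gradient step of length `L⁻¹` from `y` decreases `φ` by at least
`‖∇φ y‖² / (2L)`, and by minimality by at most `φ y - φ x`; this yields
`f y ≥ f x + ⟪∇f x, y - x⟫ + ‖∇f y - ∇f x‖² / (2L)`. Adding this inequality to the one with `x`
and `y` swapped gives `⟪∇f x - ∇f y, x - y⟫ ≥ ‖∇f x - ∇f y‖² / L`, which is the claim after
scaling by `L⁻¹`.
-/

open AffineMap Set

section GradientInequalities

variable {E : Type*} [NormedAddCommGroup E] [InnerProductSpace ℝ E] [CompleteSpace E]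
  {g : E → ℝ} {g' : E → E} {L : ℝ}

theorem HasGradientAt.hasDerivAt_comp_lineMap {a x y : E} {t : ℝ}
    (h : HasGradientAt g a (lineMap x y t)) :
    HasDerivAt (g ∘ lineMap (k := ℝ) x y) ⟪a, y - x⟫ t :=
  h.hasFDerivAt.comp_hasDerivAt t hasDerivAt_lineMap

theorem HasGradientAt.sub_inner {a z : E} (h : HasGradientAt g a z) (b : E) :
    HasGradientAt (fun w => g w - ⟪b, w⟫) (a - b) z := by
  rw [hasGradientAt_iff_hasFDerivAt, map_sub]
  exact h.hasFDerivAt.sub (InnerProductSpace.toDual ℝ E b).hasFDerivAt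

theorem ConvexOn.add_inner_gradient_le (hg : ConvexOn ℝ univ g) {a x : E}
    (h : HasGradientAt g a x) (y : E) : g x + ⟪a, y - x⟫ ≤ g y := by
  have hline : ConvexOn ℝ univ (g ∘ lineMap (k := ℝ) x y) := by
    simpa only [preimage_univ] using hg.comp_affineMap (lineMap x y)
  have := hline.le_slope_of_hasDerivAt (mem_univ 0) (mem_univ 1) zero_lt_one
    (HasGradientAt.hasDerivAt_comp_lineMap (by simpa only [lineMap_apply_zero] using h))
  simp only [slope_def_field, Function.comp_apply, lineMap_apply_one, lineMap_apply_zero,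
    sub_zero, div_one] at this
  linarith

omit [CompleteSpace E] in
theorem inner_sub_lineMap_le (hlip : ∀ a b, ‖g' a - g' b‖ ≤ L * ‖a - b‖) (x y : E) {t : ℝ}
    (ht : 0 ≤ t) : ⟪g' (lineMap x y t) - g' x, y - x⟫ ≤ L * t * ‖y - x‖ ^ 2 :=
  calc ⟪g' (lineMap x y t) - g' x, y - x⟫
      ≤ ‖g' (lineMap x y t) - g' x‖ * ‖y - x‖ := real_inner_le_norm _ _
    _ ≤ L * ‖lineMap x y t - x‖ * ‖y - x‖ := by gcongr; exact hlip _ _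
    _ = L * t * ‖y - x‖ ^ 2 := by
      rw [← vsub_eq_sub, lineMap_vsub_left, vsub_eq_sub, norm_smul, Real.norm_of_nonneg ht]
      ring

theorem le_add_inner_gradient_add_sq_of_lipschitz (hgrad : ∀ z, HasGradientAt g (g' z) z)
    (hlip : ∀ a b, ‖g' a - g' b‖ ≤ L * ‖a - b‖) (x y : E) :
    g y ≤ g x + ⟪g' x, y - x⟫ + L / 2 * ‖y - x‖ ^ 2 := by
  set ψ : ℝ → ℝ := fun s => g (lineMap x y s) - s * ⟪g' x, y - x⟫ - L / 2 * s ^ 2 * ‖y - x‖ ^ 2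
  have hderiv (t : ℝ) : HasDerivAt ψ
      (⟪g' (lineMap x y t), y - x⟫ - ⟪g' x, y - x⟫ - L * t * ‖y - x‖ ^ 2) t := by
    have hline : HasDerivAt (fun s => g (lineMap x y s)) ⟪g' (lineMap x y t), y - x⟫ t :=
      (hgrad _).hasDerivAt_comp_lineMap
    have hquad := ((hasDerivAt_pow 2 t).const_mul (L / 2)).mul_const (‖y - x‖ ^ 2)
    exact ((hline.sub ((hasDerivAt_id t).mul_const ⟪g' x, y - x⟫)).sub hquad).congr_deriv
      (by push_cast; ring)
  have hanti : AntitoneOn ψ (Icc 0 1) := by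
    refine antitoneOn_of_deriv_nonpos (convex_Icc 0 1)
      (fun t _ => (hderiv t).continuousAt.continuousWithinAt)
      (fun t _ => (hderiv t).differentiableAt.differentiableWithinAt) fun t ht => ?_
    rw [interior_Icc] at ht
    have := inner_sub_lineMap_le hlip x y ht.1.le
    rw [(hderiv t).deriv, ← inner_sub_left]
    linarith
  have := hanti (left_mem_Icc.2 zero_le_one) (right_mem_Icc.2 zero_le_one) zero_le_one
  simp only [ψ, lineMap_apply_one, lineMap_apply_zero] at this
  linarith

theorem add_sq_norm_gradient_le_of_forall_le (hgrad : ∀ z, HasGradientAt g (g' z) z)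
    (hlip : ∀ a b, ‖g' a - g' b‖ ≤ L * ‖a - b‖) {m : E} (hm : ∀ z, g m ≤ g z) (y : E) :
    g m + ‖g' y‖ ^ 2 / (2 * L) ≤ g y := by
  have hstep : y - L⁻¹ • g' y - y = -(L⁻¹ • g' y) := by abel
  have hdesc := le_add_inner_gradient_add_sq_of_lipschitz hgrad hlip y (y - L⁻¹ • g' y)
  rw [hstep, inner_neg_right, real_inner_smul_right, real_inner_self_eq_norm_sq, norm_neg,
    norm_smul, mul_pow, Real.norm_eq_abs, sq_abs] at hdesc
  have hinv : L⁻¹ * L * L⁻¹ = L⁻¹ := by simpa using mul_inv_mul_cancel L⁻¹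
  have hgain : ‖g' y‖ ^ 2 / (2 * L) = L⁻¹ * ‖g' y‖ ^ 2 - L / 2 * (L⁻¹ ^ 2 * ‖g' y‖ ^ 2) := by
    linear_combination (‖g' y‖ ^ 2 / 2) * hinv
  linarith [hm (y - L⁻¹ • g' y)]

theorem ConvexOn.add_inner_gradient_add_sq_norm_sub_le (hg : ConvexOn ℝ univ g)
    (hgrad : ∀ z, HasGradientAt g (g' z) z) (hlip : ∀ a b, ‖g' a - g' b‖ ≤ L * ‖a - b‖)
    (x y : E) : g x + ⟪g' x, y - x⟫ + ‖g' y - g' x‖ ^ 2 / (2 * L) ≤ g y := by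
  set φ : E → ℝ := fun w => g w - ⟪g' x, w⟫
  have hφgrad (z : E) : HasGradientAt φ (g' z - g' x) z := (hgrad z).sub_inner (g' x)
  have hφconv : ConvexOn ℝ univ φ := hg.sub ((innerₛₗ ℝ (g' x)).concaveOn convex_univ)
  have hφmin (z : E) : φ x ≤ φ z := by
    simpa only [sub_self, inner_zero_left, add_zero] using
      hφconv.add_inner_gradient_le (hφgrad x) z
  have := add_sq_norm_gradient_le_of_forall_le hφgrad
    (fun a b => by simpa only [sub_sub_sub_cancel_right] using hlip a b) hφmin y
  simp only [φ, inner_sub_right] at this ⊢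
  linarith

theorem ConvexOn.sq_norm_gradient_sub_div_le_inner (hg : ConvexOn ℝ univ g)
    (hgrad : ∀ z, HasGradientAt g (g' z) z) (hlip : ∀ a b, ‖g' a - g' b‖ ≤ L * ‖a - b‖)
    (x y : E) : ‖g' x - g' y‖ ^ 2 / L ≤ ⟪g' x - g' y, x - y⟫ := by
  have hxy := hg.add_inner_gradient_add_sq_norm_sub_le hgrad hlip x y
  have hyx := hg.add_inner_gradient_add_sq_norm_sub_le hgrad hlip y x
  rw [norm_sub_rev] at hxy
  have hswap : ⟪g' x, y - x⟫ = -⟪g' x, x - y⟫ := by rw [← inner_neg_right, neg_sub]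
  have hhalf : ‖g' x - g' y‖ ^ 2 / L = 2 * (‖g' x - g' y‖ ^ 2 / (2 * L)) := by ring
  rw [inner_sub_left]
  linarith

end GradientInequalities

/-- If `f : ℝ^d → ℝ` is convex and differentiable with `L`-Lipschitz continuous gradient
(`L > 0`), then `L⁻¹ ∇f` is firmly nonexpansive:
`⟨L⁻¹∇f(u) − L⁻¹∇f(v), u − v⟩ ≥ ‖L⁻¹∇f(u) − L⁻¹∇f(v)‖²`. -/
theorem inv_lipschitz_gradient_firmly_nonexpansive {d : ℕ}
    (f : EuclideanSpace ℝ (Fin d) → ℝ) (f' : EuclideanSpace ℝ (Fin d) → EuclideanSpace ℝ (Fin d))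
    (L : ℝ) (hL : 0 < L)
    (hconv : ConvexOn ℝ Set.univ f)
    (hgrad : ∀ x, HasGradientAt f (f' x) x)
    (hlip : ∀ x y, ‖f' x - f' y‖ ≤ L * ‖x - y‖)
    (u v : EuclideanSpace ℝ (Fin d)) :
    ⟪L⁻¹ • f' u - L⁻¹ • f' v, u - v⟫ ≥ ‖L⁻¹ • f' u - L⁻¹ • f' v‖ ^ 2 := by
  have hcoco := hconv.sq_norm_gradient_sub_div_le_inner hgrad hlip u v
  rw [← smul_sub, real_inner_smul_left, norm_smul, mul_pow, Real.norm_eq_abs, sq_abs]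
  calc L⁻¹ ^ 2 * ‖f' u - f' v‖ ^ 2 = L⁻¹ * (‖f' u - f' v‖ ^ 2 / L) := by ring
    _ ≤ L⁻¹ * ⟪f' u - f' v, u - v⟫ := by gcongr
end

section
/- Let (a_n) and (b_n) be sequences of nonnegative reals with Σ_n a_n < ∞ and Σ_n b_n < ∞. If a sequence (ε_n) of nonnegative reals satisfies ε_{n+1}² ≤ (1 + 2a_n)ε_n² + 2 b_n ε_{n+1} for all n, then (ε_n) is bounded. -/
/-!
Completing the square in `ε_{n+1}` linearizes the recursion to
`|ε_{n+1}| ≤ (1 + |a_n|) |ε_n| + 2 |b_n|`. Summable real sequences are absolutely summable, so the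
discrete Grönwall inequality bounds `|ε_n|` by `(|ε_0| + 2 ∑ |b_k|) exp (∑ |a_k|)`.
-/

open Real Finset

theorem abs_le_of_sq_le_one_add_two_mul_sq_add_two_mul {x y a b : ℝ}
    (h : x ^ 2 ≤ (1 + 2 * a) * y ^ 2 + 2 * b * x) :
    |x| ≤ (1 + |a|) * |y| + 2 * |b| := by
  have hsq : (x - b) ^ 2 ≤ ((1 + |a|) * |y| + |b|) ^ 2 :=
    calc (x - b) ^ 2 = x ^ 2 - 2 * b * x + b ^ 2 := by ring
      _ ≤ (1 + 2 * a) * y ^ 2 + b ^ 2 := by linarith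
      _ ≤ (1 + |a|) ^ 2 * |y| ^ 2 + |b| ^ 2 := by
        rw [sq_abs, sq_abs]
        gcongr
        nlinarith [le_abs_self a, sq_nonneg |a|]
      _ ≤ ((1 + |a|) * |y| + |b|) ^ 2 := by
        nlinarith [mul_nonneg (mul_nonneg (abs_nonneg a) (abs_nonneg y)) (abs_nonneg b),
          mul_nonneg (abs_nonneg y) (abs_nonneg b)]
  have hxb : |x - b| ≤ (1 + |a|) * |y| + |b| := abs_le_of_sq_le_sq hsq (by positivity)
  calc |x| = |(x - b) + b| := by rw [sub_add_cancel]
    _ ≤ |x - b| + |b| := abs_add_le _ _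
    _ ≤ (1 + |a|) * |y| + 2 * |b| := by linarith

theorem discrete_gronwall_tsum {u b c : ℕ → ℝ} (hu₀ : 0 ≤ u 0)
    (hu : ∀ n, u (n + 1) ≤ (1 + c n) * u n + b n) (hc : ∀ n, 0 ≤ c n) (hb : ∀ n, 0 ≤ b n)
    (hsc : Summable c) (hsb : Summable b) (n : ℕ) :
    u n ≤ (u 0 + ∑' k, b k) * exp (∑' k, c k) := by
  have hgronwall := discrete_gronwall hu₀ (fun n _ ↦ hu n) (fun n _ ↦ hc n) (fun n _ ↦ hb n)
    (Nat.zero_le n)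
  have hB : ∑ k ∈ Ico 0 n, b k ≤ ∑' k, b k := hsb.sum_le_tsum _ fun k _ ↦ hb k
  have hC : ∑ k ∈ Ico 0 n, c k ≤ ∑' k, c k := hsc.sum_le_tsum _ fun k _ ↦ hc k
  have hbound₀ : 0 ≤ u 0 + ∑' k, b k := add_nonneg hu₀ (tsum_nonneg hb)
  exact hgronwall.trans (by gcongr)

theorem bounded_of_recursive_inequality_general
    (a b ε : ℕ → ℝ)
    (hsa : Summable a) (hsb : Summable b)
    (hrec : ∀ n, ε (n + 1) ^ 2 ≤ (1 + 2 * a n) * ε n ^ 2 + 2 * b n * ε (n + 1)) :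
    ∃ C : ℝ, ∀ n, ε n ≤ C := by
  have hlin : ∀ n, |ε (n + 1)| ≤ (1 + |a n|) * |ε n| + 2 * |b n| := fun n ↦
    abs_le_of_sq_le_one_add_two_mul_sq_add_two_mul (hrec n)
  refine ⟨(|ε 0| + ∑' k, 2 * |b k|) * exp (∑' k, |a k|), fun n ↦ (le_abs_self _).trans ?_⟩
  exact discrete_gronwall_tsum (u := fun n ↦ |ε n|) (abs_nonneg _) hlin (fun _ ↦ abs_nonneg _)
    (fun _ ↦ by positivity) hsa.abs (hsb.abs.mul_left 2) n

/-- Let `(a_n)` and `(b_n)` be summable sequences of nonnegative reals. If a sequence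
`(ε_n)` of nonnegative reals satisfies `ε_{n+1}² ≤ (1 + 2a_n)ε_n² + 2 b_n ε_{n+1}` for
all `n`, then `(ε_n)` is bounded. -/
theorem bounded_of_recursive_inequality
    (a b ε : ℕ → ℝ)
    (ha : ∀ n, 0 ≤ a n) (hb : ∀ n, 0 ≤ b n) (hε : ∀ n, 0 ≤ ε n)
    (hsa : Summable a) (hsb : Summable b)
    (hrec : ∀ n, ε (n + 1) ^ 2 ≤ (1 + 2 * a n) * ε n ^ 2 + 2 * b n * ε (n + 1)) :
    ∃ C : ℝ, ∀ n, ε n ≤ C :=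
  bounded_of_recursive_inequality_general a b ε hsa hsb hrec
end

section
/- Let μ > 0, L ≥ 0, (μ_n) a sequence of positive reals with Σ_n |μ_n − μ| < ∞, A : ℝ^d → ℝ^{d'} linear, and α, β > 0 with β‖A‖² < α^{-1} − L/2 (operator/spectral norm). Then the block matrices M_n = [[ (μ_n α)^{-1} I , −Aᵀ ], [ −A , μ_n β^{-1} I ]] and M = [[ (μ α)^{-1} I , −Aᵀ ], [ −A , μ β^{-1} I ]] on ℝ^{d+d'} are positive definite, and there exist constants C₁, C₂ > 0 independent of n such that ⟨(u,v), M_n(u,v)⟩ − L‖u‖₂²/(2μ_n) ≥ C₁‖(u,v)‖₂² for all n and all (u,v) ∈ ℝ^{d+d'}, and ⟨(u,v), M(u,v)⟩ ≥ C₂²‖(u,v)‖₂². -/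
/-!
Expanding the quadratic form, `⟨x, M_m x⟩ − L‖u‖²/(2m) = c‖u‖²/m + m‖v‖²/β − 2⟪Au, v⟫` with
`c = α⁻¹ − L/2`. For any `t` with `β‖A‖² < t < c`, Young's inequality
`2‖A‖‖u‖‖v‖ ≤ t‖u‖²/m + m‖A‖²‖v‖²/t` leaves `(c − t)‖u‖²/m + m(β⁻¹ − ‖A‖²/t)‖v‖²`, whose two
coefficients are positive and bounded away from zero as long as `m` stays in a compact subinterval
of `(0, ∞)`. Since `μ_n → μ > 0`, all the `μ_n` and `μ` lie in one such interval.
-/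

open scoped RealInnerProductSpace

/-- The Euclidean inner product on `ℝ^{d+d'} = ℝ^d × ℝ^{d'}` (sum of the componentwise
inner products). -/
noncomputable def pairInner {d d' : ℕ}
    (x y : EuclideanSpace ℝ (Fin d) × EuclideanSpace ℝ (Fin d')) : ℝ :=
  ⟪x.1, y.1⟫ + ⟪x.2, y.2⟫

/-- The block matrix `[[ (m α)^{-1} I , −Aᵀ ], [ −A , m β^{-1} I ]]` acting on
`ℝ^{d+d'} = ℝ^d × ℝ^{d'}`. -/
noncomputable def blockM {d d' : ℕ}
    (A : EuclideanSpace ℝ (Fin d) →L[ℝ] EuclideanSpace ℝ (Fin d'))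
    (α β m : ℝ) (x : EuclideanSpace ℝ (Fin d) × EuclideanSpace ℝ (Fin d')) :
    EuclideanSpace ℝ (Fin d) × EuclideanSpace ℝ (Fin d') :=
  ((m * α)⁻¹ • x.1 - (ContinuousLinearMap.adjoint A) x.2, (m * β⁻¹) • x.2 - A x.1)

open Set Filter Topology

theorem exists_pos_subset_Icc_of_tendsto {u : ℕ → ℝ} {l : ℝ} (hu : ∀ n, 0 < u n) (hl : 0 < l)
    (h : Tendsto u atTop (𝓝 l)) : ∃ a b, 0 < a ∧ insert l (range u) ⊆ Icc a b := by
  have hK := h.isCompact_insert_range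
  obtain ⟨a, haK, ha⟩ := hK.exists_isLeast (insert_nonempty l _)
  obtain ⟨b, -, hb⟩ := hK.exists_isGreatest (insert_nonempty l _)
  refine ⟨a, b, ?_, fun y hy => ⟨ha hy, hb hy⟩⟩
  rcases haK with rfl | ⟨n, rfl⟩
  exacts [hl, hu n]

theorem exists_coercive_quadratic {β g c a b : ℝ} (hβ : 0 < β) (hc : β * g ^ 2 < c)
    (ha : 0 < a) (hab : a ≤ b) :
    ∃ C > 0, ∀ m ∈ Icc a b, ∀ p q : ℝ,
      C * (p ^ 2 + q ^ 2) ≤ c / m * p ^ 2 + m * β⁻¹ * q ^ 2 - 2 * g * p * q := by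
  obtain ⟨t, hgt, htc⟩ := exists_between hc
  have ht : 0 < t := by nlinarith [sq_nonneg g]
  have hk : 0 < β⁻¹ - g ^ 2 / t := by
    rw [sub_pos, div_lt_iff₀ ht, inv_mul_eq_div, lt_div_iff₀ hβ]
    linarith
  refine ⟨min ((c - t) / b) (a * (β⁻¹ - g ^ 2 / t)),
    lt_min (div_pos (by linarith) (by linarith)) (mul_pos ha hk), fun m ⟨ham, hmb⟩ p q => ?_⟩
  have hm : 0 < m := ha.trans_le ham
  have young : 2 * g * p * q ≤ t / m * p ^ 2 + m * g ^ 2 / t * q ^ 2 := by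
    have key : t / m * p ^ 2 + m * g ^ 2 / t * q ^ 2 - 2 * g * p * q
        = (t * p - m * g * q) ^ 2 / (m * t) := by
      field_simp
      ring
    have : 0 ≤ (t * p - m * g * q) ^ 2 / (m * t) := by positivity
    linarith
  have hp : min ((c - t) / b) (a * (β⁻¹ - g ^ 2 / t)) * p ^ 2 ≤ (c - t) / m * p ^ 2 := by
    gcongr
    exact (min_le_left _ _).trans (div_le_div_of_nonneg_left (by linarith) hm hmb)
  have hq : min ((c - t) / b) (a * (β⁻¹ - g ^ 2 / t)) * q ^ 2
      ≤ m * (β⁻¹ - g ^ 2 / t) * q ^ 2 := by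
    gcongr
    exact (min_le_right _ _).trans (by gcongr)
  have split : c / m * p ^ 2 + m * β⁻¹ * q ^ 2
      = (c - t) / m * p ^ 2 + m * (β⁻¹ - g ^ 2 / t) * q ^ 2
        + (t / m * p ^ 2 + m * g ^ 2 / t * q ^ 2) := by
    ring
  linarith

theorem sq_norm_fst_add_sq_norm_snd_pos {E F : Type*} [NormedAddCommGroup E]
    [NormedAddCommGroup F] {x : E × F} (hx : x ≠ 0) : 0 < ‖x.1‖ ^ 2 + ‖x.2‖ ^ 2 := by
  rcases ne_or_eq x.1 0 with h | h
  · have := norm_pos_iff.2 h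
    positivity
  · have h2 : x.2 ≠ 0 := fun h2 => hx (Prod.ext h h2)
    have := norm_pos_iff.2 h2
    positivity

section BlockM

variable {d d' : ℕ} (A : EuclideanSpace ℝ (Fin d) →L[ℝ] EuclideanSpace ℝ (Fin d'))

theorem pairInner_blockM (α β m : ℝ)
    (x : EuclideanSpace ℝ (Fin d) × EuclideanSpace ℝ (Fin d')) :
    pairInner x (blockM A α β m x)
      = (m * α)⁻¹ * ‖x.1‖ ^ 2 + m * β⁻¹ * ‖x.2‖ ^ 2 - 2 * ⟪A x.1, x.2⟫ := by
  simp only [pairInner, blockM, inner_sub_right, real_inner_smul_right,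
    real_inner_self_eq_norm_sq, ContinuousLinearMap.adjoint_inner_right]
  rw [real_inner_comm x.2 (A x.1)]
  ring

theorem exists_coercive_blockM {L α β a b : ℝ} (hβ : 0 < β) (hstep : β * ‖A‖ ^ 2 < α⁻¹ - L / 2)
    (ha : 0 < a) (hab : a ≤ b) :
    ∃ C > 0, ∀ m ∈ Icc a b, ∀ x : EuclideanSpace ℝ (Fin d) × EuclideanSpace ℝ (Fin d'),
      C * (‖x.1‖ ^ 2 + ‖x.2‖ ^ 2)
        ≤ pairInner x (blockM A α β m x) - L * ‖x.1‖ ^ 2 / (2 * m) := by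
  obtain ⟨C, hC, hquad⟩ := exists_coercive_quadratic hβ hstep ha hab
  refine ⟨C, hC, fun m hm x => ?_⟩
  have hm0 : 0 < m := ha.trans_le hm.1
  have hcross : ⟪A x.1, x.2⟫ ≤ ‖A‖ * ‖x.1‖ * ‖x.2‖ :=
    (real_inner_le_norm _ _).trans (mul_le_mul_of_nonneg_right (A.le_opNorm x.1) (norm_nonneg _))
  have hcoef : (α⁻¹ - L / 2) / m * ‖x.1‖ ^ 2
      = (m * α)⁻¹ * ‖x.1‖ ^ 2 - L * ‖x.1‖ ^ 2 / (2 * m) := by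
    rw [mul_inv]
    field_simp
  rw [pairInner_blockM]
  linarith [hquad m hm ‖x.1‖ ‖x.2‖]

end BlockM

theorem blockM_posdef_and_bounds_general {d d' : ℕ}
    (μ : ℝ) (hμ : 0 < μ) (L : ℝ) (hL : 0 ≤ L)
    (μs : ℕ → ℝ) (hμs : ∀ n, 0 < μs n)
    (hsum : Summable fun n => |μs n - μ|)
    (A : EuclideanSpace ℝ (Fin d) →L[ℝ] EuclideanSpace ℝ (Fin d'))
    (α β : ℝ) (hβ : 0 < β)
    (hstep : β * ‖A‖ ^ 2 < α⁻¹ - L / 2) :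
    (∀ n, ∀ x : EuclideanSpace ℝ (Fin d) × EuclideanSpace ℝ (Fin d'),
        x ≠ 0 → 0 < pairInner x (blockM A α β (μs n) x)) ∧
    (∀ x : EuclideanSpace ℝ (Fin d) × EuclideanSpace ℝ (Fin d'),
        x ≠ 0 → 0 < pairInner x (blockM A α β μ x)) ∧
    (∃ C₁ > (0 : ℝ), ∀ n, ∀ x : EuclideanSpace ℝ (Fin d) × EuclideanSpace ℝ (Fin d'),
        C₁ * (‖x.1‖ ^ 2 + ‖x.2‖ ^ 2)
          ≤ pairInner x (blockM A α β (μs n) x) - L * ‖x.1‖ ^ 2 / (2 * μs n)) ∧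
    (∃ C₂ > (0 : ℝ), ∀ x : EuclideanSpace ℝ (Fin d) × EuclideanSpace ℝ (Fin d'),
        C₂ ^ 2 * (‖x.1‖ ^ 2 + ‖x.2‖ ^ 2) ≤ pairInner x (blockM A α β μ x)) := by
  have hlim : Tendsto μs atTop (𝓝 μ) :=
    tendsto_iff_norm_sub_tendsto_zero.2 (by simpa only [Real.norm_eq_abs] using
      hsum.tendsto_atTop_zero)
  obtain ⟨a, b, ha, hab⟩ := exists_pos_subset_Icc_of_tendsto hμs hμ hlim
  have hμ_mem : μ ∈ Icc a b := hab (mem_insert μ _)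
  have hμs_mem n : μs n ∈ Icc a b := hab (mem_insert_of_mem μ (mem_range_self n))
  obtain ⟨C, hC, hcoer⟩ := exists_coercive_blockM A hβ hstep ha (hμ_mem.1.trans hμ_mem.2)
  have hM : ∀ m ∈ Icc a b, ∀ x, C * (‖x.1‖ ^ 2 + ‖x.2‖ ^ 2) ≤ pairInner x (blockM A α β m x) :=
    fun m hm x => (hcoer m hm x).trans (sub_le_self _ (by have := ha.trans_le hm.1; positivity))
  have hpos : ∀ m ∈ Icc a b, ∀ x, x ≠ 0 → 0 < pairInner x (blockM A α β m x) :=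
    fun m hm x hx => (mul_pos hC (sq_norm_fst_add_sq_norm_snd_pos hx)).trans_le (hM m hm x)
  refine ⟨fun n => hpos _ (hμs_mem n), hpos μ hμ_mem, ⟨C, hC, fun n => hcoer _ (hμs_mem n)⟩,
    ⟨√C, Real.sqrt_pos.2 hC, fun x => ?_⟩⟩
  rw [Real.sq_sqrt hC.le]
  exact hM μ hμ_mem x

/-- Under `β‖A‖² < α⁻¹ − L/2`, the matrices `M_n` and `M` are positive definite, and the
bounds `⟨x, M_n x⟩ − L‖x₁‖²/(2μ_n) ≥ C₁‖x‖²` and `⟨x, M x⟩ ≥ C₂²‖x‖²` hold with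
`C₁, C₂ > 0` independent of `n`. -/
theorem blockM_posdef_and_bounds {d d' : ℕ}
    (μ : ℝ) (hμ : 0 < μ) (L : ℝ) (hL : 0 ≤ L)
    (μs : ℕ → ℝ) (hμs : ∀ n, 0 < μs n)
    (hsum : Summable fun n => |μs n - μ|)
    (A : EuclideanSpace ℝ (Fin d) →L[ℝ] EuclideanSpace ℝ (Fin d'))
    (α β : ℝ) (hα : 0 < α) (hβ : 0 < β)
    (hstep : β * ‖A‖ ^ 2 < α⁻¹ - L / 2) :
    (∀ n, ∀ x : EuclideanSpace ℝ (Fin d) × EuclideanSpace ℝ (Fin d'),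
        x ≠ 0 → 0 < pairInner x (blockM A α β (μs n) x)) ∧
    (∀ x : EuclideanSpace ℝ (Fin d) × EuclideanSpace ℝ (Fin d'),
        x ≠ 0 → 0 < pairInner x (blockM A α β μ x)) ∧
    (∃ C₁ > (0 : ℝ), ∀ n, ∀ x : EuclideanSpace ℝ (Fin d) × EuclideanSpace ℝ (Fin d'),
        C₁ * (‖x.1‖ ^ 2 + ‖x.2‖ ^ 2)
          ≤ pairInner x (blockM A α β (μs n) x) - L * ‖x.1‖ ^ 2 / (2 * μs n)) ∧
    (∃ C₂ > (0 : ℝ), ∀ x : EuclideanSpace ℝ (Fin d) × EuclideanSpace ℝ (Fin d'),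
        C₂ ^ 2 * (‖x.1‖ ^ 2 + ‖x.2‖ ^ 2) ≤ pairInner x (blockM A α β μ x)) :=
  blockM_posdef_and_bounds_general μ hμ L hL μs hμs hsum A α β hβ hstep
end
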